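/- arXiv:2312.12313 — 2 statements merged into one kernel-verified Lean document; each statement's English description precedes it below -/
import Mathlib

section
/- Let 𝓘 be a maximal nested collection on the vertex set V of a finite tree Γ and let v ∈ V. Then the connected components of I_v ∖ {v} are exactly the maximal elements, with respect to inclusion, of the family {I ∈ 𝓘 : I ⊊ I_v}. In particular, every connected component of I_v ∖ {v} belongs to 𝓘. -/
namespace Paper

variable {V : Type*}

/-- The subgraph of `G` induced on `S` is connected (any two vertices of `S` are joined
by a walk inside `S`). -/
def Conn (G : SimpleGraph V) (S : Set V) : Prop := (G.induce S).Preconnected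

/-- `C` is a connected component of (the subgraph of `G` induced on) `U`:
a maximal nonempty connected subset of `U`. -/
def IsCompOf (G : SimpleGraph V) (C U : Set V) : Prop :=
  C.Nonempty ∧ C ⊆ U ∧ Conn G C ∧
    ∀ D : Set V, C ⊆ D → D ⊆ U → Conn G D → D = C

/-- A nested collection on (the vertex set of) `G`: a family of nonempty connected
subsets such that (1) any two members are nested or disjoint, and (2) the connected
components of the union of any pairwise disjoint subfamily are exactly the members of
that subfamily. -/
def Nested (G : SimpleGraph V) (𝓘 : Set (Set V)) : Prop :=
  (∀ S ∈ 𝓘, S.Nonempty ∧ Conn G S) ∧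
  (∀ S ∈ 𝓘, ∀ T ∈ 𝓘, S ⊆ T ∨ T ⊆ S ∨ S ∩ T = ∅) ∧
  (∀ 𝓙 ⊆ 𝓘, (𝓙.Pairwise fun A B => A ∩ B = ∅) →
    ∀ C : Set V, IsCompOf G C (⋃₀ 𝓙) ↔ C ∈ 𝓙)

/-- A maximal nested collection: a nested collection whose union is all of `V` and
which is not properly contained in any other nested collection. -/
def MaxNested (G : SimpleGraph V) (𝓘 : Set (Set V)) : Prop :=
  Nested G 𝓘 ∧ ⋃₀ 𝓘 = Set.univ ∧
    ∀ 𝓙 : Set (Set V), Nested G 𝓙 → 𝓘 ⊆ 𝓙 → 𝓙 = 𝓘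

/-- `Iv` assigns to each vertex `v` the smallest element of `𝓘` containing `v`
(denoted `I_v`). -/
def IsLeastContaining (𝓘 : Set (Set V)) (Iv : V → Set V) : Prop :=
  ∀ v : V, Iv v ∈ 𝓘 ∧ v ∈ Iv v ∧ ∀ J ∈ 𝓘, v ∈ J → Iv v ⊆ J

/-- The vertex set `[x,y]` of the unique path in a tree `G` from `x` to `y`:
the vertices lying on every path from `x` to `y`. -/
def interval (G : SimpleGraph V) (x y : V) : Set V :=
  {u | ∀ p : G.Walk x y, p.IsPath → u ∈ p.support}

/-- `S` is rooted with respect to the nested collection (with least-member function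
`Iv`): `S` is nonempty, connected, and, `m` denoting the unique element of `S` with
`S ⊆ I_m`, for all `i, j ∈ S` one has `i ∈ I_j` iff `j ∈ [i, m]`. -/
def Rooted (G : SimpleGraph V) (Iv : V → Set V) (S : Set V) : Prop :=
  S.Nonempty ∧ Conn G S ∧
    ∃ m ∈ S, S ⊆ Iv m ∧ ∀ i ∈ S, ∀ j ∈ S, (i ∈ Iv j ↔ j ∈ interval G i m)

/-- `S̄ := {v ∈ S : I_v ⊄ S}`. -/
def bar (Iv : V → Set V) (S : Set V) : Set V := {v ∈ S | ¬ Iv v ⊆ S}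

/-- `S` is weakly rooted: `S` is nonempty, connected, and either `S̄ = ∅` or `S̄` is a
(nonempty) connected rooted set. -/
def WeaklyRooted (G : SimpleGraph V) (Iv : V → Set V) (S : Set V) : Prop :=
  S.Nonempty ∧ Conn G S ∧ (bar Iv S = ∅ ∨ Rooted G Iv (bar Iv S))

/-- Two (nonempty connected) subsets `I`, `J` are compatible if `I ⊆ J`, or `J ⊆ I`, or
they are disjoint and no edge of `G` joins a vertex of `I` to a vertex of `J`. -/
def Compatible (G : SimpleGraph V) (I J : Set V) : Prop :=
  I ⊆ J ∨ J ⊆ I ∨ (I ∩ J = ∅ ∧ ∀ a ∈ I, ∀ b ∈ J, ¬ G.Adj a b)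

end Paper

/-!
A component `C` of `I_v \ {v}` is compatible with every member `J` of `𝓘`: if `v ∈ J` then
`C ⊆ I_v ⊆ J`; if `J` is disjoint from `I_v` it is edge-separated from it; otherwise
`J ⊆ I_v \ {v}` is connected, so it lies inside `C` or avoids `C` without touching it. Since
nestedness amounts to pairwise compatibility, `insert C 𝓘` is nested, and maximality gives
`C ∈ 𝓘`. The components are then maximal among the proper members of `I_v`, as every such
member lies in `I_v \ {v}`; conversely a maximal proper member lies in a component, which by
maximality it equals.
-/

namespace Paper

variable {V : Type*} {G : SimpleGraph V}

lemma Conn.subset_of_adj_closed {D T : Set V} (hD : Conn G D)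
    (hT : ∀ a ∈ D, ∀ b ∈ D, G.Adj a b → a ∈ T → b ∈ T) {c : V} (hc : c ∈ D)
    (hcT : c ∈ T) : D ⊆ T := by
  suffices h : ∀ {x y : D}, (G.induce D).Walk x y → x.1 ∈ T → y.1 ∈ T from
    fun d hd => h (hD ⟨c, hc⟩ ⟨d, hd⟩).some hcT
  intro x y p
  induction p with
  | nil => exact id
  | cons hadj _ ih => exact fun hx => ih (hT _ (Subtype.prop _) _ (Subtype.prop _) hadj hx)

lemma Conn.insert_of_adj {S : Set V} {a b : V} (hS : Conn G S) (ha : a ∈ S)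
    (hab : G.Adj a b) : Conn G (insert b S) := by
  rw [← Set.union_singleton]
  exact (SimpleGraph.connected_induce_union (t := {b}) hS
    SimpleGraph.Preconnected.of_subsingleton ha rfl hab).preconnected

lemma IsCompOf.not_adj {C U : Set V} (hC : IsCompOf G C U) {a b : V} (ha : a ∈ C)
    (hb : b ∈ U) (hbC : b ∉ C) : ¬ G.Adj a b := fun hab =>
  hbC <| hC.2.2.2 (insert b C) (Set.subset_insert _ _) (Set.insert_subset hb hC.2.1)
    (hC.2.2.1.insert_of_adj ha hab) ▸ Set.mem_insert b C

lemma IsCompOf.subset_of_mem {C U J : Set V} (hC : IsCompOf G C U) (hJU : J ⊆ U)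
    (hJ : Conn G J) {x : V} (hxJ : x ∈ J) (hxC : x ∈ C) : J ⊆ C :=
  hJ.subset_of_adj_closed (fun _ _ _ hb hab haC =>
    by_contra fun hbC => hC.not_adj haC (hJU hb) hbC hab) hxJ hxC

lemma IsCompOf.compatible_of_subset {C U J : Set V} (hC : IsCompOf G C U) (hJU : J ⊆ U)
    (hJ : Conn G J) : Compatible G C J := by
  by_cases hmeet : (C ∩ J).Nonempty
  · obtain ⟨x, hxC, hxJ⟩ := hmeet
    exact Or.inr (Or.inl (hC.subset_of_mem hJU hJ hxJ hxC))
  · refine Or.inr (Or.inr ⟨Set.not_nonempty_iff_eq_empty.mp hmeet, fun a ha b hb => ?_⟩)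
    exact hC.not_adj ha (hJU hb) fun hbC => hmeet ⟨b, hbC, hb⟩

lemma exists_isCompOf_superset [Finite V] {U J : Set V} (hJU : J ⊆ U) (hJne : J.Nonempty)
    (hJ : Conn G J) : ∃ C, IsCompOf G C U ∧ J ⊆ C := by
  obtain ⟨C, ⟨hJC, hCU, hC⟩, hCmax⟩ := Set.Finite.exists_maximalFor id
    {D : Set V | J ⊆ D ∧ D ⊆ U ∧ Conn G D} (Set.toFinite _) ⟨J, le_rfl, hJU, hJ⟩
  exact ⟨C, ⟨hJne.mono hJC, hCU, hC, fun D hCD hDU hD =>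
    le_antisymm (hCmax ⟨hJC.trans hCD, hDU, hD⟩ hCD) hCD⟩, hJC⟩

lemma Conn.subset_of_mem_sUnion {𝓙 : Set (Set V)}
    (h𝓙 : 𝓙.Pairwise fun A B => ∀ a ∈ A, ∀ b ∈ B, ¬ G.Adj a b)
    {D J : Set V} (hD : Conn G D) (hD𝓙 : D ⊆ ⋃₀ 𝓙) (hJ : J ∈ 𝓙) {x : V} (hxD : x ∈ D)
    (hxJ : x ∈ J) : D ⊆ J := by
  refine hD.subset_of_adj_closed (fun a _ b hb hab haJ => ?_) hxD hxJ
  obtain ⟨J', hJ', hbJ'⟩ := hD𝓙 hb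
  by_contra hbJ
  exact h𝓙 hJ hJ' (by rintro rfl; exact hbJ hbJ') a haJ b hbJ' hab

lemma isCompOf_sUnion_iff {𝓙 : Set (Set V)} (hne : ∀ J ∈ 𝓙, J.Nonempty)
    (hconn : ∀ J ∈ 𝓙, Conn G J)
    (h𝓙 : 𝓙.Pairwise fun A B => ∀ a ∈ A, ∀ b ∈ B, ¬ G.Adj a b) (C : Set V) :
    IsCompOf G C (⋃₀ 𝓙) ↔ C ∈ 𝓙 := by
  constructor
  · rintro ⟨⟨c, hc⟩, hC𝓙, hC, hCmax⟩
    obtain ⟨J, hJ, hcJ⟩ := hC𝓙 hc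
    rwa [← hCmax J (hC.subset_of_mem_sUnion h𝓙 hC𝓙 hJ hc hcJ) (Set.subset_sUnion_of_mem hJ)
      (hconn J hJ)]
  · intro hC
    obtain ⟨c, hc⟩ := hne C hC
    refine ⟨⟨c, hc⟩, Set.subset_sUnion_of_mem hC, hconn C hC, fun D hCD hD𝓙 hD => ?_⟩
    exact le_antisymm (hD.subset_of_mem_sUnion h𝓙 hD𝓙 hC (hCD hc) hc) hCD

lemma Compatible.symm {I J : Set V} (h : Compatible G I J) : Compatible G J I := by
  rcases h with h | h | ⟨hdisj, hnadj⟩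
  · exact Or.inr (Or.inl h)
  · exact Or.inl h
  · exact Or.inr (Or.inr ⟨Set.inter_comm I J ▸ hdisj,
      fun b hb a ha hab => hnadj a ha b hb hab.symm⟩)

lemma Compatible.not_adj_of_inter_eq_empty {I J : Set V} (h : Compatible G I J)
    (hI : I.Nonempty) (hJ : J.Nonempty) (hdisj : I ∩ J = ∅) :
    ∀ a ∈ I, ∀ b ∈ J, ¬ G.Adj a b := by
  rcases h with h | h | ⟨_, hnadj⟩
  · exact absurd (Set.inter_eq_left.mpr h ▸ hdisj) hI.ne_empty
  · exact absurd (Set.inter_eq_right.mpr h ▸ hdisj) hJ.ne_empty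
  · exact hnadj

lemma Nested.compatible {𝓘 : Set (Set V)} (h𝓘 : Nested G 𝓘) {I J : Set V} (hI : I ∈ 𝓘)
    (hJ : J ∈ 𝓘) : Compatible G I J := by
  obtain ⟨hmem, hnest, hcomp⟩ := h𝓘
  rcases hnest I hI J hJ with h | h | hdisj
  · exact Or.inl h
  · exact Or.inr (Or.inl h)
  refine Or.inr (Or.inr ⟨hdisj, fun a ha b hb => ?_⟩)
  have hIJ : I ≠ J := by
    rintro rfl
    exact (hmem I hI).1.ne_empty (Set.inter_self I ▸ hdisj)
  have hpair : ({I, J} : Set (Set V)).Pairwise fun A B => A ∩ B = ∅ :=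
    Set.pairwise_pair.mpr fun _ => ⟨hdisj, Set.inter_comm I J ▸ hdisj⟩
  have hIcomp := (hcomp {I, J} (Set.insert_subset hI (Set.singleton_subset_iff.mpr hJ)) hpair
    I).mpr (Set.mem_insert I _)
  rw [Set.sUnion_pair] at hIcomp
  exact hIcomp.not_adj ha (Or.inr hb) fun hbI => hdisj.subset ⟨hbI, hb⟩

/-- Condition (2) of `Nested` comes for free: compatible disjoint sets have no edges between
them, so their union has exactly them as components. -/
theorem nested_iff_pairwise_compatible {𝓘 : Set (Set V)} :
    Nested G 𝓘 ↔ (∀ S ∈ 𝓘, S.Nonempty ∧ Conn G S) ∧ 𝓘.Pairwise (Compatible G) := by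
  refine ⟨fun h𝓘 => ⟨h𝓘.1, fun I hI J hJ _ => h𝓘.compatible hI hJ⟩, ?_⟩
  rintro ⟨hmem, hcompat⟩
  refine ⟨hmem, fun I hI J hJ => ?_, fun 𝓙 h𝓙 hdisj => ?_⟩
  · rcases eq_or_ne I J with rfl | hIJ
    · exact Or.inl le_rfl
    · rcases hcompat hI hJ hIJ with h | h | h
      exacts [Or.inl h, Or.inr (Or.inl h), Or.inr (Or.inr h.1)]
  · refine isCompOf_sUnion_iff (fun J hJ => (hmem J (h𝓙 hJ)).1)
      (fun J hJ => (hmem J (h𝓙 hJ)).2) fun I hI J hJ hIJ => ?_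
    exact (hcompat (h𝓙 hI) (h𝓙 hJ) hIJ).not_adj_of_inter_eq_empty (hmem I (h𝓙 hI)).1
      (hmem J (h𝓙 hJ)).1 (hdisj hI hJ hIJ)

lemma MaxNested.mem_of_compatible {𝓘 : Set (Set V)} (h𝓘 : MaxNested G 𝓘) {C : Set V}
    (hCne : C.Nonempty) (hC : Conn G C) (hcompat : ∀ J ∈ 𝓘, Compatible G C J) : C ∈ 𝓘 := by
  obtain ⟨hmem, hpair⟩ := nested_iff_pairwise_compatible.mp h𝓘.1
  have hins : Nested G (insert C 𝓘) := by
    refine nested_iff_pairwise_compatible.mpr ⟨?_, ?_⟩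
    · rintro S (rfl | hS)
      exacts [⟨hCne, hC⟩, hmem S hS]
    · exact hpair.insert fun J hJ _ => ⟨hcompat J hJ, (hcompat J hJ).symm⟩
  exact h𝓘.2.2 _ hins (Set.subset_insert C 𝓘) ▸ Set.mem_insert C 𝓘

lemma IsCompOf.compatible_of_diff_singleton {C U J : Set V} {v : V}
    (hC : IsCompOf G C (U \ {v})) (hJ : Conn G J) (hUJ : Compatible G U J)
    (hvJ : v ∈ J → U ⊆ J) : Compatible G C J := by
  have hCU : C ⊆ U := hC.2.1.trans Set.sdiff_subset
  rcases hUJ with hUJ | hJU | ⟨hdisj, hnadj⟩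
  · exact Or.inl (hCU.trans hUJ)
  · by_cases hv : v ∈ J
    · exact Or.inl (hCU.trans (hvJ hv))
    · exact hC.compatible_of_subset (fun x hx => ⟨hJU hx, by rintro rfl; exact hv hx⟩) hJ
  · exact Or.inr (Or.inr ⟨Set.subset_empty_iff.mp (hdisj ▸ Set.inter_subset_inter_left J hCU),
      fun a ha => hnadj a (hCU ha)⟩)

lemma IsLeastContaining.subset_diff_singleton {𝓘 : Set (Set V)} {Iv : V → Set V}
    (hIv : IsLeastContaining 𝓘 Iv) {v : V} {J : Set V} (hJ : J ∈ 𝓘) (hJv : J ⊂ Iv v) :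
    J ⊆ Iv v \ {v} := fun x hx =>
  ⟨hJv.subset hx, by rintro rfl; exact hJv.not_subset ((hIv x).2.2 J hJ hx)⟩

end Paper

theorem statement_11_general {V : Type*} [Fintype V] (G : SimpleGraph V)
    (𝓘 : Set (Set V)) (h𝓘 : Paper.MaxNested G 𝓘)
    (Iv : V → Set V) (hIv : Paper.IsLeastContaining 𝓘 Iv) (v : V) :
    (∀ C : Set V, Paper.IsCompOf G C (Iv v \ {v}) ↔
      (C ∈ 𝓘 ∧ C ⊂ Iv v ∧ ∀ J ∈ 𝓘, J ⊂ Iv v → C ⊆ J → J = C)) ∧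
    (∀ C : Set V, Paper.IsCompOf G C (Iv v \ {v}) → C ∈ 𝓘) := by
  obtain ⟨hIvmem, hvIv, hleast⟩ := hIv v
  have hmem : ∀ C, Paper.IsCompOf G C (Iv v \ {v}) → C ∈ 𝓘 := fun C hC =>
    h𝓘.mem_of_compatible hC.1 hC.2.2.1 fun J hJ => hC.compatible_of_diff_singleton
      (h𝓘.1.1 J hJ).2 (h𝓘.1.compatible hIvmem hJ) (hleast J hJ)
  have hmaximal : ∀ C, Paper.IsCompOf G C (Iv v \ {v}) →
      C ∈ 𝓘 ∧ C ⊂ Iv v ∧ ∀ J ∈ 𝓘, J ⊂ Iv v → C ⊆ J → J = C := fun C hC =>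
    ⟨hmem C hC, (Set.ssubset_iff_of_subset (hC.2.1.trans Set.sdiff_subset)).mpr
      ⟨v, hvIv, fun hvC => (hC.2.1 hvC).2 rfl⟩,
      fun J hJ hJv hCJ => hC.2.2.2 J hCJ (hIv.subset_diff_singleton hJ hJv) (h𝓘.1.1 J hJ).2⟩
  refine ⟨fun C => ⟨hmaximal C, ?_⟩, hmem⟩
  rintro ⟨hC, hCv, hCmax⟩
  obtain ⟨D, hD, hCD⟩ := Paper.exists_isCompOf_superset (hIv.subset_diff_singleton hC hCv)
    (h𝓘.1.1 C hC).1 (h𝓘.1.1 C hC).2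
  rwa [hCmax D (hmem D hD) (hmaximal D hD).2.1 hCD] at hD

/-- Let `𝓘` be a maximal nested collection on the vertex set `V` of a finite tree and
let `v ∈ V`. Then the connected components of `I_v \ {v}` are exactly the maximal
elements, with respect to inclusion, of the family `{I ∈ 𝓘 : I ⊊ I_v}`. In particular,
every connected component of `I_v \ {v}` belongs to `𝓘`. -/
theorem statement_11 {V : Type*} [Fintype V] (G : SimpleGraph V) (hG : G.IsTree)
    (𝓘 : Set (Set V)) (h𝓘 : Paper.MaxNested G 𝓘)
    (Iv : V → Set V) (hIv : Paper.IsLeastContaining 𝓘 Iv) (v : V) :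
    (∀ C : Set V, Paper.IsCompOf G C (Iv v \ {v}) ↔
      (C ∈ 𝓘 ∧ C ⊂ Iv v ∧ ∀ J ∈ 𝓘, J ⊂ Iv v → C ⊆ J → J = C)) ∧
    (∀ C : Set V, Paper.IsCompOf G C (Iv v \ {v}) → C ∈ 𝓘) :=
  statement_11_general G 𝓘 h𝓘 Iv hIv v
end

section
/- Let 𝓘 be a maximal nested collection on the vertex set V of a finite tree Γ and let v ∈ V with {v} ∉ 𝓘. Then v has a neighbor u in Γ with u ∈ I_v, and for any such neighbor u one has I_u ⊊ I_v. -/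
/-!
If `I_u = I_v` for a neighbour `u ∈ I_v` of `v`, let `K` be the connected component of
`I_v \ {v}` containing `u`. Every member of `𝓘` is compatible with `K`: it either contains
`I_v`, or lies in `I_v \ {v}` and so inside `K` or away from it, or is disjoint from `I_v`
with no edge to it. So `𝓘 ∪ {K}` is still nested and maximality puts `K` in `𝓘`; but then
`I_u ⊆ K`, although `v ∈ I_u \ K`.
-/

open SimpleGraph

namespace Paper

variable {V : Type*} {G : SimpleGraph V} {A B C D K S J : Set V} {𝓘 : Set (Set V)}
  {Iv : V → Set V}

theorem conn_singleton (v : V) : Conn G {v} :=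
  Preconnected.of_subsingleton

theorem Conn.union_of_inter (hS : Conn G S) (hJ : Conn G J) (h : (S ∩ J).Nonempty) :
    Conn G (S ∪ J) :=
  (induce_union_connected hS hJ h).preconnected

theorem Conn.union_of_adj (hS : Conn G S) (hJ : Conn G J) {a b : V} (ha : a ∈ S) (hb : b ∈ J)
    (hab : G.Adj a b) : Conn G (S ∪ J) :=
  (connected_induce_union hS hJ ha hb hab).preconnected

theorem Conn.exists_adj_of_ne_singleton (hS : Conn G S) {v : V} (hv : v ∈ S) (hS₁ : S ≠ {v}) :
    ∃ u, G.Adj v u ∧ u ∈ S := by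
  obtain ⟨w, hw, hwv⟩ : ∃ w ∈ S, w ≠ v := by
    by_contra! h
    exact hS₁ (Set.eq_singleton_iff_unique_mem.mpr ⟨hv, h⟩)
  obtain ⟨p⟩ := hS ⟨v, hv⟩ ⟨w, hw⟩
  have hp : ¬p.Nil := Walk.not_nil_of_ne fun h => hwv (congrArg Subtype.val h).symm
  exact ⟨p.snd, Walk.adj_snd hp, p.snd.2⟩

theorem Conn.subset_of_not_adj (hD : Conn G D) (hDAB : D ⊆ A ∪ B)
    (hAB : ∀ a ∈ A, ∀ b ∈ B, ¬G.Adj a b) (hDA : (D ∩ A).Nonempty) : D ⊆ A := by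
  obtain ⟨x, hxD, hxA⟩ := hDA
  intro y hyD
  by_contra hyA
  obtain ⟨p⟩ := hD ⟨x, hxD⟩ ⟨y, hyD⟩
  obtain ⟨d, -, hd₁, hd₂⟩ := p.exists_boundary_dart {z | z.1 ∈ A} hxA hyA
  have hd₂B : d.snd.1 ∈ B := (hDAB d.snd.2).resolve_left hd₂
  exact hAB _ hd₁ _ hd₂B d.adj

theorem isCompOf_self_iff (hK₀ : K.Nonempty) (hK : Conn G K) : IsCompOf G C K ↔ C = K := by
  constructor
  · rintro ⟨-, hCK, -, hmax⟩
    exact (hmax K hCK le_rfl hK).symm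
  · rintro rfl
    exact ⟨hK₀, le_rfl, hK, fun D hKD hDK _ => hDK.antisymm hKD⟩

theorem IsCompOf.of_union (hC : IsCompOf G C (A ∪ B)) (hAB : ∀ a ∈ A, ∀ b ∈ B, ¬G.Adj a b)
    (hCA : (C ∩ A).Nonempty) : IsCompOf G C A := by
  obtain ⟨hC₀, hCAB, hCc, hmax⟩ := hC
  refine ⟨hC₀, Conn.subset_of_not_adj hCc hCAB hAB hCA, hCc, fun D hCD hDA hD => ?_⟩
  exact hmax D hCD (hDA.trans Set.subset_union_left) hD

theorem IsCompOf.union (hC : IsCompOf G C A) (hAB : ∀ a ∈ A, ∀ b ∈ B, ¬G.Adj a b) :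
    IsCompOf G C (A ∪ B) := by
  obtain ⟨hC₀, hCA, hCc, hmax⟩ := hC
  refine ⟨hC₀, hCA.trans Set.subset_union_left, hCc, fun D hCD hDAB hD => hmax D hCD ?_ hD⟩
  exact Conn.subset_of_not_adj hD hDAB hAB (hC₀.mono (Set.subset_inter hCD hCA))

theorem isCompOf_union_iff (hAB : ∀ a ∈ A, ∀ b ∈ B, ¬G.Adj a b) :
    IsCompOf G C (A ∪ B) ↔ IsCompOf G C A ∨ IsCompOf G C B := by
  have hBA : ∀ b ∈ B, ∀ a ∈ A, ¬G.Adj b a := fun b hb a ha h => hAB a ha b hb h.symm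
  constructor
  · intro hC
    obtain ⟨c, hc⟩ := hC.1
    rcases hC.2.1 hc with hcA | hcB
    · exact Or.inl (hC.of_union hAB ⟨c, hc, hcA⟩)
    · rw [Set.union_comm] at hC
      exact Or.inr (hC.of_union hBA ⟨c, hc, hcB⟩)
  · rintro (hC | hC)
    · exact hC.union hAB
    · rw [Set.union_comm]
      exact hC.union hBA

theorem exists_isCompOf_mem {u : V} (hu : u ∈ S) : ∃ K, IsCompOf G K S ∧ u ∈ K := by
  set K := {x | ∃ T ⊆ S, u ∈ T ∧ x ∈ T ∧ Conn G T}
  have huK : u ∈ K := ⟨{u}, by simpa using hu, rfl, rfl, conn_singleton u⟩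
  have hKS : K ⊆ S := fun x ⟨T, hTS, _, hxT, _⟩ => hTS hxT
  have hK : Conn G K := by
    refine (induce_connected_of_patches u huK fun {x} ⟨T, hTS, huT, hxT, hT⟩ => ?_).preconnected
    exact ⟨T, fun y hyT => ⟨T, hTS, huT, hyT, hT⟩, huT, hxT, hT _ _⟩
  refine ⟨K, ⟨⟨u, huK⟩, hKS, hK, fun D hKD hDS hD => ?_⟩, huK⟩
  exact hKD.antisymm' fun x hx => ⟨D, hDS, hKD huK, hx, hD⟩

theorem IsCompOf.subset_of_conn_union (hK : IsCompOf G K S) (hJS : J ⊆ S)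
    (hKJ : Conn G (K ∪ J)) : J ⊆ K := by
  have h := hK.2.2.2 _ Set.subset_union_left (Set.union_subset hK.2.1 hJS) hKJ
  exact fun x hx => h ▸ Or.inr hx

theorem IsCompOf.compatible (hK : IsCompOf G K S) (hJ : Conn G J) (hJS : J ⊆ S) :
    Compatible G K J := by
  by_cases hKJ : (K ∩ J).Nonempty
  · exact Or.inr (Or.inl (hK.subset_of_conn_union hJS (Conn.union_of_inter hK.2.2.1 hJ hKJ)))
  · refine Or.inr (Or.inr ⟨Set.not_nonempty_iff_eq_empty.mp hKJ, fun a ha b hb hab => ?_⟩)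
    exact hKJ ⟨b, hK.subset_of_conn_union hJS (Conn.union_of_adj hK.2.2.1 hJ ha hb hab) hb, hb⟩

theorem Nested.not_adj_of_inter_eq_empty (hN : Nested G 𝓘) {I : Set V} (hI : I ∈ 𝓘)
    (hJ : J ∈ 𝓘) (hIJ : I ∩ J = ∅) {a b : V} (ha : a ∈ I) (hb : b ∈ J) : ¬G.Adj a b := by
  intro hab
  have hpair : ({I, J} : Set (Set V)) ⊆ 𝓘 :=
    Set.insert_subset hI (Set.singleton_subset_iff.mpr hJ)
  have hdisj : ({I, J} : Set (Set V)).Pairwise fun A B => A ∩ B = ∅ :=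
    Set.pairwise_pair.mpr fun _ => ⟨hIJ, Set.inter_comm I J ▸ hIJ⟩
  have hconn : Conn G (I ∪ J) := Conn.union_of_adj (hN.1 I hI).2 (hN.1 J hJ).2 ha hb hab
  have hcomp : IsCompOf G (I ∪ J) (⋃₀ {I, J}) := by
    rw [Set.sUnion_pair, isCompOf_self_iff ⟨a, Or.inl ha⟩ hconn]
  rcases (hN.2.2 _ hpair hdisj _).mp hcomp with h | h
  · exact hIJ.subset ⟨h ▸ Or.inr hb, hb⟩
  · exact hIJ.subset ⟨ha, Set.mem_singleton_iff.mp h ▸ Or.inl ha⟩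

theorem Nested.insert (hN : Nested G 𝓘) (hK₀ : K.Nonempty) (hK : Conn G K)
    (hcompat : ∀ J ∈ 𝓘, Compatible G K J) : Nested G (insert K 𝓘) := by
  refine ⟨?_, ?_, fun 𝓙 h𝓙 hdisj C => ?_⟩
  · rintro S (rfl | hS)
    exacts [⟨hK₀, hK⟩, hN.1 S hS]
  · have hK_nested : ∀ J ∈ 𝓘, K ⊆ J ∨ J ⊆ K ∨ K ∩ J = ∅ := fun J hJ =>
      (hcompat J hJ).imp_right (Or.imp_right And.left)
    rintro S (rfl | hS) T (rfl | hT)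
    · exact Or.inl le_rfl
    · exact hK_nested T hT
    · rw [Set.inter_comm]
      exact or_left_comm.mp (hK_nested S hS)
    · exact hN.2.1 S hS T hT
  by_cases hK𝓙 : K ∈ 𝓙
  case neg => exact hN.2.2 𝓙 ((Set.subset_insert_iff_of_notMem hK𝓙).mp h𝓙) hdisj C
  set 𝓙₀ := 𝓙 \ {K}
  have h𝓙₀ : 𝓙₀ ⊆ 𝓘 := Set.sdiff_singleton_subset_iff.mpr h𝓙
  have hunion : ⋃₀ 𝓙 = K ∪ ⋃₀ 𝓙₀ := by
    rw [← Set.sUnion_insert, Set.insert_sdiff_singleton, Set.insert_eq_of_mem hK𝓙]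
  have hsep : ∀ a ∈ K, ∀ b ∈ ⋃₀ 𝓙₀, ¬G.Adj a b := by
    rintro a ha b ⟨J, hJ, hb⟩
    have hKJ : K ∩ J = ∅ := hdisj hK𝓙 hJ.1 (Ne.symm hJ.2)
    rcases hcompat J (h𝓙₀ hJ) with hKJ' | hJK | ⟨-, hno⟩
    · exact (hKJ.subset ⟨hK₀.some_mem, hKJ' hK₀.some_mem⟩).elim
    · exact (hKJ.subset ⟨hJK hb, hb⟩).elim
    · exact hno a ha b hb
  rw [hunion, isCompOf_union_iff hsep, isCompOf_self_iff hK₀ hK,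
    hN.2.2 𝓙₀ h𝓙₀ (hdisj.mono Set.sdiff_subset)]
  constructor
  · rintro (rfl | hC)
    exacts [hK𝓙, hC.1]
  · intro hC
    by_cases hCK : C = K
    exacts [Or.inl hCK, Or.inr ⟨hC, hCK⟩]

theorem IsLeastContaining.compatible_of_isCompOf_sdiff_singleton (hIv : IsLeastContaining 𝓘 Iv)
    (hN : Nested G 𝓘) {v : V} (hK : IsCompOf G K (Iv v \ {v})) (hJ : J ∈ 𝓘) :
    Compatible G K J := by
  have hKIv : K ⊆ Iv v := hK.2.1.trans Set.sdiff_subset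
  obtain ⟨hIvI, -, hleast⟩ := hIv v
  rcases hN.2.1 _ hIvI J hJ with hIvJ | hJIv | hdisj
  · exact Or.inl (hKIv.trans hIvJ)
  · by_cases hvJ : v ∈ J
    · exact Or.inl (hKIv.trans (hleast J hJ hvJ))
    · exact hK.compatible (hN.1 J hJ).2 fun x hx => ⟨hJIv hx, fun hxv => hvJ (hxv ▸ hx)⟩
  · have hKJ : K ∩ J = ∅ := Set.subset_empty_iff.mp (hdisj ▸ Set.inter_subset_inter_left J hKIv)
    exact Or.inr (Or.inr ⟨hKJ, fun a ha b hb =>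
      hN.not_adj_of_inter_eq_empty hIvI hJ hdisj (hKIv ha) hb⟩)

theorem MaxNested.ssubset_of_adj (h𝓘 : MaxNested G 𝓘) (hIv : IsLeastContaining 𝓘 Iv)
    {u v : V} (huv : G.Adj v u) (hu : u ∈ Iv v) : Iv u ⊂ Iv v := by
  obtain ⟨hIvI, hvIv, -⟩ := hIv v
  refine ((hIv u).2.2 _ hIvI hu).ssubset_of_ne fun heq => ?_
  have huS : u ∈ Iv v \ {v} := ⟨hu, huv.ne'⟩
  obtain ⟨K, hK, huK⟩ := exists_isCompOf_mem (G := G) huS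
  have hnested : Nested G (insert K 𝓘) :=
    h𝓘.1.insert ⟨u, huK⟩ hK.2.2.1 fun J hJ =>
      hIv.compatible_of_isCompOf_sdiff_singleton h𝓘.1 hK hJ
  have hKI : K ∈ 𝓘 := h𝓘.2.2 _ hnested (Set.subset_insert K 𝓘) ▸ Set.mem_insert K 𝓘
  have hvK : v ∈ K := (hIv u).2.2 K hKI huK (heq ▸ hvIv)
  exact (hK.2.1 hvK).2 rfl

end Paper

theorem statement_12_general {V : Type*} (G : SimpleGraph V)
    (𝓘 : Set (Set V)) (h𝓘 : Paper.MaxNested G 𝓘)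
    (Iv : V → Set V) (hIv : Paper.IsLeastContaining 𝓘 Iv)
    (v : V) (hv : ({v} : Set V) ∉ 𝓘) :
    (∃ u : V, G.Adj v u ∧ u ∈ Iv v) ∧
    (∀ u : V, G.Adj v u → u ∈ Iv v → Iv u ⊂ Iv v) := by
  obtain ⟨hIvI, hvIv, -⟩ := hIv v
  have hIv_ne : Iv v ≠ {v} := fun h => hv (h ▸ hIvI)
  exact ⟨Paper.Conn.exists_adj_of_ne_singleton (h𝓘.1.1 _ hIvI).2 hvIv hIv_ne,
    fun u huv hu => h𝓘.ssubset_of_adj hIv huv hu⟩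

/-- Let `𝓘` be a maximal nested collection on the vertex set `V` of a finite tree and
let `v ∈ V` with `{v} ∉ 𝓘`. Then `v` has a neighbor `u` with `u ∈ I_v`, and for any such
neighbor `u` one has `I_u ⊊ I_v`. -/
theorem statement_12 {V : Type*} [Fintype V] (G : SimpleGraph V) (hG : G.IsTree)
    (𝓘 : Set (Set V)) (h𝓘 : Paper.MaxNested G 𝓘)
    (Iv : V → Set V) (hIv : Paper.IsLeastContaining 𝓘 Iv)
    (v : V) (hv : ({v} : Set V) ∉ 𝓘) :
    (∃ u : V, G.Adj v u ∧ u ∈ Iv v) ∧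
    (∀ u : V, G.Adj v u → u ∈ Iv v → Iv u ⊂ Iv v) :=
  statement_12_general G 𝓘 h𝓘 Iv hIv v hv
end
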